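/- For every γ > 0 and every X ∈ ℝ^{n₁×n₂} with SVD X = V_X diag(Λ_X) U_X^*, the proximity operator of γ times the nuclear norm ‖·‖_* is Prox_{γ‖·‖_*}(X) = V_X diag(T_γ(Λ_X)) U_X^*, where T_γ is componentwise soft-thresholding: T_γ(t)_i = max(0, 1 − γ/|t_i|) t_i. -/

import Mathlib

/-!
With `P := V diag(T_γ Λ) Uᵀ`, the residual `X - P = V diag(Λ - T_γ Λ) Uᵀ` has diagonal entries
`min(Λᵢ, γ) ∈ [0, γ]`, and it is a subgradient of `γ‖·‖_*` at `P`: `⟨X - P, P⟩ = γ‖P‖_*`, while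
`⟨X - P, Z⟩ ≤ γ‖Z‖_*` for every `Z`, as one sees by writing `Z = W diag(σ) Qᵀ` and bounding
`⟨diag c, P' diag(σ) R'ᵀ⟩ ≤ γ ∑ σ` for `0 ≤ c ≤ γ` and orthogonal `P'`, `R'`. Expanding the square
then gives `F Z ≥ F P + ½‖P - Z‖²` for `F Z = ½‖X - Z‖² + γ‖Z‖_*`, so `P` is the unique minimizer.
Since the nuclear norm is only pinned down through SVDs, every `Z` needs one: it comes from
diagonalizing `Zᵀ Z` with the eigenvalues sorted decreasingly.
-/

open Matrix

/-- The rectangular `n₁ × n₂` matrix with the vector `Λ ∈ ℝ^{min n₁ n₂}` on its main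
diagonal and `0` elsewhere. -/
noncomputable def rectDiag {n₁ n₂ : ℕ} (Λ : Fin (min n₁ n₂) → ℝ) :
    Matrix (Fin n₁) (Fin n₂) ℝ :=
  Matrix.of fun i j =>
    if h : (i : ℕ) = (j : ℕ) ∧ (i : ℕ) < min n₁ n₂ then Λ ⟨(i : ℕ), h.2⟩ else 0

/-- `(V, Λ, U)` is a (full) singular value decomposition of `X ∈ ℝ^{n₁ × n₂}`. -/
noncomputable def IsSVD {n₁ n₂ : ℕ} (X : Matrix (Fin n₁) (Fin n₂) ℝ)
    (V : Matrix (Fin n₁) (Fin n₁) ℝ) (Λ : Fin (min n₁ n₂) → ℝ)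
    (U : Matrix (Fin n₂) (Fin n₂) ℝ) : Prop :=
  Vᵀ * V = 1 ∧ V * Vᵀ = 1 ∧ Uᵀ * U = 1 ∧ U * Uᵀ = 1 ∧ (∀ i, 0 ≤ Λ i) ∧
    X = V * rectDiag Λ * Uᵀ

/-- Componentwise soft-thresholding `T_γ(t)_i = max(0, 1 − γ/|t_i|) t_i`. -/
noncomputable def softThresh {n : ℕ} (γ : ℝ) (t : Fin n → ℝ) : Fin n → ℝ :=
  fun i => max 0 (1 - γ / |t i|) * t i

theorem Matrix.IsHermitian.exists_antitone_orthogonal_diagonalization {n : ℕ}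
    {A : Matrix (Fin n) (Fin n) ℝ} (hA : A.IsHermitian) :
    ∃ (W : Matrix (Fin n) (Fin n) ℝ) (μ : Fin n → ℝ),
      Wᵀ * W = 1 ∧ Antitone μ ∧ Wᵀ * A * W = diagonal μ := by
  set W₀ : Matrix (Fin n) (Fin n) ℝ := (hA.eigenvectorUnitary : Matrix (Fin n) (Fin n) ℝ)
  have hW₀ : W₀ᵀ * W₀ = 1 := Matrix.mem_unitaryGroup_iff'.mp hA.eigenvectorUnitary.2
  have hdiag : W₀ᵀ * A * W₀ = diagonal hA.eigenvalues := by
    simpa [Unitary.conjStarAlgAut_star_apply, star_eq_conjTranspose] using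
      hA.conjStarAlgAut_star_eigenvectorUnitary
  set σ := Tuple.sort (-hA.eigenvalues)
  have hconj (B : Matrix (Fin n) (Fin n) ℝ) :
      (W₀.submatrix id σ)ᵀ * B * W₀.submatrix id σ = (W₀ᵀ * B * W₀).submatrix σ σ := by
    ext i j
    simp [Matrix.mul_apply]
  refine ⟨W₀.submatrix id σ, hA.eigenvalues ∘ σ, ?_, fun i j hij => ?_, ?_⟩
  · simpa [hW₀] using hconj 1
  · simpa using Tuple.monotone_sort (-hA.eigenvalues) hij
  · rw [hconj, hdiag, submatrix_diagonal_equiv]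

section GramDiagonal
variable {m ι : Type*} [Fintype m] [DecidableEq ι] {M : Matrix m ι ℝ} {μ : ι → ℝ}

theorem inner_toLp_transpose_apply (hM : Mᵀ * M = diagonal μ) (j j' : ι) :
    inner ℝ (WithLp.toLp 2 (Mᵀ j)) (WithLp.toLp 2 (Mᵀ j')) = if j = j' then μ j else 0 := by
  rw [← diagonal_apply, ← hM, EuclideanSpace.inner_toLp_toLp]
  simp [Matrix.mul_apply, dotProduct, mul_comm]

theorem eq_sum_sq_of_transpose_mul_self_eq_diagonal (hM : Mᵀ * M = diagonal μ) (j : ι) :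
    μ j = ∑ i, M i j ^ 2 := by
  simpa [Matrix.mul_apply, sq] using (congrFun (congrFun hM j) j).symm

theorem nonneg_of_transpose_mul_self_eq_diagonal (hM : Mᵀ * M = diagonal μ) (j : ι) :
    0 ≤ μ j :=
  eq_sum_sq_of_transpose_mul_self_eq_diagonal hM j ▸ Finset.sum_nonneg fun _ _ => sq_nonneg _

theorem apply_eq_zero_of_transpose_mul_self_eq_diagonal (hM : Mᵀ * M = diagonal μ) {j : ι}
    (hj : μ j = 0) (i : m) : M i j = 0 := by
  rw [eq_sum_sq_of_transpose_mul_self_eq_diagonal hM,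
    Finset.sum_eq_zero_iff_of_nonneg fun _ _ => sq_nonneg _] at hj
  exact pow_eq_zero_iff two_ne_zero |>.mp (hj i (Finset.mem_univ i))

theorem card_ne_zero_le_of_transpose_mul_self_eq_diagonal [Fintype ι]
    (hM : Mᵀ * M = diagonal μ) : Fintype.card {j // μ j ≠ 0} ≤ Fintype.card m := by
  classical
  rw [← rank_diagonal, ← hM, rank_transpose_mul_self]
  exact rank_le_card_height M

end GramDiagonal

theorem eq_zero_of_le_of_transpose_mul_self_eq_diagonal {n₁ n₂ : ℕ}
    {M : Matrix (Fin n₁) (Fin n₂) ℝ} {μ : Fin n₂ → ℝ} (hM : Mᵀ * M = diagonal μ)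
    (hμ : Antitone μ) {j : Fin n₂} (hj : n₁ ≤ j) : μ j = 0 := by
  classical
  by_contra hne
  have hpos : 0 < μ j := (nonneg_of_transpose_mul_self_eq_diagonal hM j).lt_of_ne' hne
  have hcard : (j : ℕ) + 1 ≤ n₁ :=
    calc (j : ℕ) + 1 = (Finset.Iic j).card := (Fin.card_Iic j).symm
      _ ≤ (Finset.univ.filter fun i => μ i ≠ 0).card :=
        Finset.card_le_card fun i hi => by
          simpa using (hpos.trans_le (hμ (Finset.mem_Iic.mp hi))).ne'
      _ = Fintype.card {i // μ i ≠ 0} := (Fintype.card_subtype _).symm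
      _ ≤ n₁ := by simpa using card_ne_zero_le_of_transpose_mul_self_eq_diagonal hM
  omega

section RectDiag
variable {n₁ n₂ : ℕ}

theorem sum_dite_lt_eq_sum {R : Type*} [AddCommMonoid R] {k n : ℕ} (hkn : k ≤ n) (f : Fin k → R) :
    ∑ j : Fin n, (if h : (j : ℕ) < k then f ⟨j, h⟩ else 0) = ∑ l, f l :=
  (Fintype.sum_of_injective (Fin.castLE hkn) (Fin.castLE_injective hkn) _ _
    (fun j hj => dif_neg fun h => hj ⟨⟨j, h⟩, rfl⟩) (fun l => by simp)).symm

theorem rectDiag_sub (a b : Fin (min n₁ n₂) → ℝ) :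
    rectDiag a - rectDiag b = (rectDiag (a - b) : Matrix (Fin n₁) (Fin n₂) ℝ) := by
  ext i j
  simp only [rectDiag, Matrix.sub_apply, of_apply]
  split_ifs <;> simp

theorem rectDiag_castLE (a : Fin (min n₁ n₂) → ℝ) (k : Fin (min n₁ n₂)) :
    rectDiag a (Fin.castLE (min_le_left _ _) k) (Fin.castLE (min_le_right _ _) k) = a k := by
  rw [rectDiag, of_apply, dif_pos ⟨rfl, k.2⟩]
  rfl

theorem mul_rectDiag_apply {l : Type*} (A : Matrix l (Fin n₁) ℝ) (σ : Fin (min n₁ n₂) → ℝ)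
    (i : l) (j : Fin n₂) :
    (A * rectDiag σ) i j =
      if h : (j : ℕ) < min n₁ n₂ then A i (Fin.castLE (min_le_left _ _) ⟨j, h⟩) * σ ⟨j, h⟩
      else 0 := by
  rw [Matrix.mul_apply]
  split_ifs with h
  · rw [Fintype.sum_eq_single (Fin.castLE (min_le_left _ _) ⟨j, h⟩) fun m hm => ?_]
    · simp [rectDiag]
    · rw [rectDiag, of_apply, dif_neg fun hmj => hm (Fin.ext hmj.1), mul_zero]
  · refine Finset.sum_eq_zero fun m _ => ?_
    rw [rectDiag, of_apply, dif_neg (by rintro ⟨hmj, hm⟩; exact h (hmj ▸ hm)), mul_zero]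

theorem mul_rectDiag_mul_transpose_apply {l₁ l₂ : Type*} (A : Matrix l₁ (Fin n₁) ℝ)
    (σ : Fin (min n₁ n₂) → ℝ) (B : Matrix l₂ (Fin n₂) ℝ) (i : l₁) (j : l₂) :
    (A * rectDiag σ * Bᵀ) i j =
      ∑ k, A i (Fin.castLE (min_le_left _ _) k) * σ k * B j (Fin.castLE (min_le_right _ _) k) := by
  rw [Matrix.mul_apply, ← sum_dite_lt_eq_sum (min_le_right n₁ n₂)]
  refine Finset.sum_congr rfl fun m _ => ?_
  rw [mul_rectDiag_apply]
  split_ifs <;> simp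

end RectDiag

theorem exists_orthogonal_mul_rectDiag_eq {n₁ n₂ : ℕ} {M : Matrix (Fin n₁) (Fin n₂) ℝ}
    {μ : Fin n₂ → ℝ} (hM : Mᵀ * M = diagonal μ) (hμ : Antitone μ) :
    ∃ (V : Matrix (Fin n₁) (Fin n₁) ℝ) (σ : Fin (min n₁ n₂) → ℝ),
      Vᵀ * V = 1 ∧ (∀ k, 0 ≤ σ k) ∧ M = V * rectDiag σ := by
  classical
  -- column `k` of `M`, normalized, moved to index `k` of `Fin n₁`; only `k ∈ s` is ever used
  set v : Fin n₁ → EuclideanSpace ℝ (Fin n₁) := fun k =>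
    if h : (k : ℕ) < n₂ then (√(μ ⟨k, h⟩))⁻¹ • WithLp.toLp 2 (Mᵀ ⟨k, h⟩) else 0
  set s : Set (Fin n₁) := {k | ∃ h : (k : ℕ) < n₂, μ ⟨k, h⟩ ≠ 0}
  have hv : Orthonormal ℝ (s.domRestrict v) := by
    rw [orthonormal_iff_ite]
    rintro ⟨k, hk, hμk⟩ ⟨k', hk', -⟩
    simp only [Set.domRestrict_apply, v, dif_pos hk, dif_pos hk', real_inner_smul_left,
      real_inner_smul_right, inner_toLp_transpose_apply hM]
    by_cases hkk : k = k'
    · subst hkk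
      have hpos : 0 < μ ⟨k, hk⟩ :=
        (nonneg_of_transpose_mul_self_eq_diagonal hM _).lt_of_ne' hμk
      simp only [if_true]
      field_simp
      rw [Real.sq_sqrt hpos.le]
    · simp [Fin.ext_iff, Fin.val_inj, hkk]
  obtain ⟨b, hb⟩ := hv.exists_orthonormalBasis_extension_of_card_eq (by simp)
  refine ⟨(EuclideanSpace.basisFun (Fin n₁) ℝ).toBasis.toMatrix b,
    fun l => √(μ (Fin.castLE (min_le_right _ _) l)), ?_, fun _ => Real.sqrt_nonneg _, ?_⟩
  · simpa using
      (EuclideanSpace.basisFun (Fin n₁) ℝ).toMatrix_orthonormalBasis_conjTranspose_mul_self b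
  · ext i j
    rw [mul_rectDiag_apply]
    split_ifs with h
    · by_cases hj : μ j = 0
      · simp [hj, apply_eq_zero_of_transpose_mul_self_eq_diagonal hM hj]
      · have hmem : (Fin.castLE (min_le_left _ _) ⟨j, h⟩ : Fin n₁) ∈ s := ⟨j.2, hj⟩
        rw [Module.Basis.toMatrix_apply, hb _ hmem]
        have hpos : 0 < √(μ j) := Real.sqrt_pos.mpr
          ((nonneg_of_transpose_mul_self_eq_diagonal hM j).lt_of_ne' hj)
        simp only [v, Fin.castLE_mk, Fin.is_lt, ↓reduceDIte, Fin.eta, map_smul, Finsupp.coe_smul,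
          Pi.smul_apply, OrthonormalBasis.coe_toBasis_repr_apply, EuclideanSpace.basisFun_repr,
          transpose_apply, smul_eq_mul]
        field_simp
    · exact apply_eq_zero_of_transpose_mul_self_eq_diagonal hM
        (eq_zero_of_le_of_transpose_mul_self_eq_diagonal hM hμ (by omega)) i

theorem exists_isSVD {n₁ n₂ : ℕ} (Z : Matrix (Fin n₁) (Fin n₂) ℝ) :
    ∃ V Λ U, IsSVD Z V Λ U := by
  have hZZ : (Zᵀ * Z).IsHermitian := by simpa using isHermitian_conjTranspose_mul_self Z
  obtain ⟨W, μ, hW, hμ, hdiag⟩ := hZZ.exists_antitone_orthogonal_diagonalization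
  have hZW : (Z * W)ᵀ * (Z * W) = diagonal μ := by
    rw [← hdiag, transpose_mul]
    simp only [Matrix.mul_assoc]
  obtain ⟨V, σ, hV, hσ, hM⟩ := exists_orthogonal_mul_rectDiag_eq hZW hμ
  refine ⟨V, σ, W, hV, mul_eq_one_comm.mp hV, hW, mul_eq_one_comm.mp hW, hσ, ?_⟩
  rw [← hM, Matrix.mul_assoc, mul_eq_one_comm.mp hW, Matrix.mul_one]

section SoftThresh
variable {n : ℕ} {γ : ℝ} {t : Fin n → ℝ} {i : Fin n}

theorem softThresh_apply_of_nonneg (hγ : 0 ≤ γ) (ht : 0 ≤ t i) :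
    softThresh γ t i = max (t i - γ) 0 := by
  rcases ht.eq_or_lt with h | h
  · simp [softThresh, ← h, hγ]
  · rw [softThresh, abs_of_pos h, max_mul_of_nonneg _ _ h.le, zero_mul, max_comm, sub_mul,
      div_mul_cancel₀ _ h.ne', one_mul]

theorem softThresh_nonneg (ht : 0 ≤ t i) : 0 ≤ softThresh γ t i :=
  mul_nonneg (le_max_left _ _) ht

theorem softThresh_le_self (hγ : 0 ≤ γ) (ht : 0 ≤ t i) : softThresh γ t i ≤ t i := by
  rw [softThresh_apply_of_nonneg hγ ht]
  exact max_le (by linarith) ht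

theorem sub_softThresh_le (hγ : 0 ≤ γ) (ht : 0 ≤ t i) : t i - softThresh γ t i ≤ γ := by
  rw [softThresh_apply_of_nonneg hγ ht]
  linarith [le_max_left (t i - γ) 0]

theorem sub_softThresh_mul_softThresh (hγ : 0 ≤ γ) (ht : 0 ≤ t i) :
    (t i - softThresh γ t i) * softThresh γ t i = γ * softThresh γ t i := by
  rw [softThresh_apply_of_nonneg hγ ht]
  rcases le_total (t i - γ) 0 with h | h
  · simp [max_eq_right h]
  · rw [max_eq_left h]
    ring

end SoftThresh

theorem sum_sq_apply_le_one {m n ι : Type*} [Fintype m] [DecidableEq n] [Fintype ι]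
    {P : Matrix m n ℝ} (hP : Pᵀ * P = 1) {e : ι → m} (he : Function.Injective e) (j : n) :
    ∑ k, P (e k) j ^ 2 ≤ 1 := by
  have hcol : ∑ i, P i j ^ 2 = 1 := by
    simpa [Matrix.mul_apply, sq, one_apply_eq] using congrFun (congrFun hP j) j
  calc ∑ k, P (e k) j ^ 2 = ∑ i ∈ Finset.univ.map ⟨e, he⟩, P i j ^ 2 :=
        (Finset.sum_map Finset.univ ⟨e, he⟩ fun i => P i j ^ 2).symm
    _ ≤ ∑ i, P i j ^ 2 := Finset.sum_le_univ_sum_of_nonneg fun _ => sq_nonneg _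
    _ = 1 := hcol

theorem transpose_mul_transpose_mul_self_eq_one {m n : Type*} [Fintype m] [DecidableEq m]
    [DecidableEq n]
    {V : Matrix m m ℝ} {W : Matrix m n ℝ} (hV : V * Vᵀ = 1) (hW : Wᵀ * W = 1) :
    (Vᵀ * W)ᵀ * (Vᵀ * W) = 1 := by
  rw [transpose_mul, transpose_transpose, Matrix.mul_assoc, ← Matrix.mul_assoc V, hV,
    Matrix.one_mul, hW]

section FrobInner
variable {m n : Type*} [Fintype m] [Fintype n]

def frobInner (A B : Matrix m n ℝ) : ℝ := ∑ i, ∑ j, A i j * B i j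

theorem frobInner_comm (A B : Matrix m n ℝ) : frobInner A B = frobInner B A := by
  simp only [frobInner, mul_comm]

theorem frobInner_eq_trace (A B : Matrix m n ℝ) : frobInner A B = trace (Aᵀ * B) := by
  rw [frobInner, trace, Finset.sum_comm]
  simp [Matrix.mul_apply]

theorem frobInner_mul_mul_transpose {m' n' m'' n'' : Type*} [Fintype m'] [Fintype n']
    [Fintype m''] [Fintype n'']
    (V : Matrix m m' ℝ) (A : Matrix m' n' ℝ) (U : Matrix n n' ℝ)
    (W : Matrix m m'' ℝ) (B : Matrix m'' n'' ℝ) (Q : Matrix n n'' ℝ) :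
    frobInner (V * A * Uᵀ) (W * B * Qᵀ) = frobInner A (Vᵀ * W * B * (Uᵀ * Q)ᵀ) := by
  rw [frobInner_eq_trace, frobInner_eq_trace]
  simp only [transpose_mul, transpose_transpose, Matrix.mul_assoc]
  rw [trace_mul_comm U]
  simp only [Matrix.mul_assoc]

end FrobInner

section RectDiagInner
variable {n₁ n₂ : ℕ}

theorem frobInner_rectDiag_left (c : Fin (min n₁ n₂) → ℝ) (M : Matrix (Fin n₁) (Fin n₂) ℝ) :
    frobInner (rectDiag c) M =
      ∑ k, c k * M (Fin.castLE (min_le_left _ _) k) (Fin.castLE (min_le_right _ _) k) := by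
  rw [frobInner_comm, frobInner_eq_trace, trace, ← sum_dite_lt_eq_sum (min_le_right n₁ n₂)]
  refine Finset.sum_congr rfl fun j _ => ?_
  rw [diag_apply, mul_rectDiag_apply]
  split_ifs <;> simp [mul_comm]

theorem frobInner_rectDiag_le {γ : ℝ} (hγ : 0 ≤ γ) {c σ : Fin (min n₁ n₂) → ℝ}
    (hc₀ : ∀ k, 0 ≤ c k) (hcγ : ∀ k, c k ≤ γ) (hσ : ∀ k, 0 ≤ σ k)
    {P : Matrix (Fin n₁) (Fin n₁) ℝ} {R : Matrix (Fin n₂) (Fin n₂) ℝ}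
    (hP : Pᵀ * P = 1) (hR : Rᵀ * R = 1) :
    frobInner (rectDiag c) (P * rectDiag σ * Rᵀ) ≤ γ * ∑ k, σ k := by
  set e₁ : Fin (min n₁ n₂) → Fin n₁ := Fin.castLE (min_le_left _ _)
  set e₂ : Fin (min n₁ n₂) → Fin n₂ := Fin.castLE (min_le_right _ _)
  have hcol (l : Fin (min n₁ n₂)) : ∑ k, c k * (P (e₁ k) (e₁ l) * R (e₂ k) (e₂ l)) ≤ γ :=
    calc ∑ k, c k * (P (e₁ k) (e₁ l) * R (e₂ k) (e₂ l))
        ≤ ∑ k, γ / 2 * (P (e₁ k) (e₁ l) ^ 2 + R (e₂ k) (e₂ l) ^ 2) :=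
          Finset.sum_le_sum fun k _ => by
            nlinarith [mul_nonneg (hc₀ k) (sq_nonneg (P (e₁ k) (e₁ l) - R (e₂ k) (e₂ l))),
              mul_nonneg (sub_nonneg.2 (hcγ k))
                (add_nonneg (sq_nonneg (P (e₁ k) (e₁ l))) (sq_nonneg (R (e₂ k) (e₂ l))))]
      _ = γ / 2 * (∑ k, P (e₁ k) (e₁ l) ^ 2 + ∑ k, R (e₂ k) (e₂ l) ^ 2) := by
          rw [← Finset.mul_sum, Finset.sum_add_distrib]
      _ ≤ γ / 2 * (1 + 1) := by
          gcongr
          · exact sum_sq_apply_le_one hP (Fin.castLE_injective _) _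
          · exact sum_sq_apply_le_one hR (Fin.castLE_injective _) _
      _ = γ := by ring
  calc frobInner (rectDiag c) (P * rectDiag σ * Rᵀ)
      = ∑ l, σ l * ∑ k, c k * (P (e₁ k) (e₁ l) * R (e₂ k) (e₂ l)) := by
        simp_rw [frobInner_rectDiag_left, mul_rectDiag_mul_transpose_apply, Finset.mul_sum]
        rw [Finset.sum_comm]
        exact Finset.sum_congr rfl fun _ _ => Finset.sum_congr rfl fun _ _ => by ring
    _ ≤ ∑ l, σ l * γ := Finset.sum_le_sum fun l _ => mul_le_mul_of_nonneg_left (hcol l) (hσ l)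
    _ = γ * ∑ k, σ k := by rw [Finset.mul_sum]; simp only [mul_comm]

end RectDiagInner

section Prox
variable {m n : Type*} [Fintype m] [Fintype n]

theorem sum_sq_sub_eq_add_frobInner (X P Z : Matrix m n ℝ) :
    ∑ i, ∑ j, (X i j - Z i j) ^ 2 =
      ∑ i, ∑ j, (X i j - P i j) ^ 2 + 2 * (frobInner (X - P) P - frobInner (X - P) Z)
        + ∑ i, ∑ j, (P i j - Z i j) ^ 2 := by
  simp only [frobInner, Matrix.sub_apply, Finset.mul_sum, ← Finset.sum_sub_distrib,
    ← Finset.sum_add_distrib]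
  exact Finset.sum_congr rfl fun _ _ => Finset.sum_congr rfl fun _ _ => by ring

theorem eq_of_sum_sq_sub_nonpos {A B : Matrix m n ℝ} (h : ∑ i, ∑ j, (A i j - B i j) ^ 2 ≤ 0) :
    A = B := by
  have h0 := le_antisymm h (Finset.sum_nonneg fun _ _ => Finset.sum_nonneg fun _ _ => sq_nonneg _)
  ext i j
  rw [Finset.sum_eq_zero_iff_of_nonneg fun _ _ => Finset.sum_nonneg fun _ _ => sq_nonneg _] at h0
  have hi := h0 i (Finset.mem_univ _)
  rw [Finset.sum_eq_zero_iff_of_nonneg fun _ _ => sq_nonneg _] at hi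
  exact sub_eq_zero.mp (pow_eq_zero_iff two_ne_zero |>.mp (hi j (Finset.mem_univ _)))

theorem unique_minimizer_of_subgradient {g : Matrix m n ℝ → ℝ} {X P : Matrix m n ℝ}
    (hP : frobInner (X - P) P = g P) (hg : ∀ Z, frobInner (X - P) Z ≤ g Z) :
    (∀ Z : Matrix m n ℝ,
        (1 / 2 : ℝ) * (∑ i, ∑ j, (X i j - P i j) ^ 2) + g P
          ≤ (1 / 2 : ℝ) * (∑ i, ∑ j, (X i j - Z i j) ^ 2) + g Z) ∧
      (∀ Z : Matrix m n ℝ,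
        (∀ W : Matrix m n ℝ,
          (1 / 2 : ℝ) * (∑ i, ∑ j, (X i j - Z i j) ^ 2) + g Z
            ≤ (1 / 2 : ℝ) * (∑ i, ∑ j, (X i j - W i j) ^ 2) + g W) →
        Z = P) := by
  have hgap (Z : Matrix m n ℝ) :
      (1 / 2 : ℝ) * (∑ i, ∑ j, (X i j - P i j) ^ 2) + g P
          + (1 / 2 : ℝ) * (∑ i, ∑ j, (P i j - Z i j) ^ 2)
        ≤ (1 / 2 : ℝ) * (∑ i, ∑ j, (X i j - Z i j) ^ 2) + g Z := by
    rw [sum_sq_sub_eq_add_frobInner X P Z]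
    linarith [hg Z]
  have hsq (Z : Matrix m n ℝ) : 0 ≤ ∑ i, ∑ j, (P i j - Z i j) ^ 2 :=
    Finset.sum_nonneg fun _ _ => Finset.sum_nonneg fun _ _ => sq_nonneg _
  refine ⟨fun Z => by linarith [hgap Z, hsq Z], fun Z hZ => ?_⟩
  refine (eq_of_sum_sq_sub_nonpos ?_).symm
  linarith [hgap Z, hZ P]

end Prox

/-- For every `γ > 0` and every `X` with SVD `X = V diag(Λ) Uᵀ`, the proximity operator
of `γ‖·‖_*` (nuclear norm = sum of singular values) is `V diag(T_γ(Λ)) Uᵀ`: this matrix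
is the unique minimizer of `Z ↦ (1/2)‖X − Z‖_F² + γ‖Z‖_*`. -/
theorem prox_nuclear_norm {n₁ n₂ : ℕ}
    (nuclearNorm : Matrix (Fin n₁) (Fin n₂) ℝ → ℝ)
    (hN : ∀ Z V Λ U, IsSVD Z V Λ U → nuclearNorm Z = ∑ i, Λ i)
    (γ : ℝ) (hγ : 0 < γ)
    (X : Matrix (Fin n₁) (Fin n₂) ℝ)
    (V : Matrix (Fin n₁) (Fin n₁) ℝ) (Λ : Fin (min n₁ n₂) → ℝ)
    (U : Matrix (Fin n₂) (Fin n₂) ℝ) (hSVD : IsSVD X V Λ U) :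
    (∀ Z : Matrix (Fin n₁) (Fin n₂) ℝ,
        (1 / 2 : ℝ) * (∑ i, ∑ j, (X i j - (V * rectDiag (softThresh γ Λ) * Uᵀ) i j) ^ 2)
            + γ * nuclearNorm (V * rectDiag (softThresh γ Λ) * Uᵀ)
          ≤ (1 / 2 : ℝ) * (∑ i, ∑ j, (X i j - Z i j) ^ 2) + γ * nuclearNorm Z) ∧
      (∀ Z : Matrix (Fin n₁) (Fin n₂) ℝ,
        (∀ W : Matrix (Fin n₁) (Fin n₂) ℝ,
          (1 / 2 : ℝ) * (∑ i, ∑ j, (X i j - Z i j) ^ 2) + γ * nuclearNorm Z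
            ≤ (1 / 2 : ℝ) * (∑ i, ∑ j, (X i j - W i j) ^ 2) + γ * nuclearNorm W) →
        Z = V * rectDiag (softThresh γ Λ) * Uᵀ) := by
  obtain ⟨hV, hV', hU, hU', hΛ, rfl⟩ := hSVD
  set T := softThresh γ Λ
  have hT : IsSVD (V * rectDiag T * Uᵀ) V T U :=
    ⟨hV, hV', hU, hU', fun k => softThresh_nonneg (hΛ k), rfl⟩
  have hres : V * rectDiag Λ * Uᵀ - V * rectDiag T * Uᵀ = V * rectDiag (Λ - T) * Uᵀ := by
    rw [← Matrix.sub_mul, ← Matrix.mul_sub, rectDiag_sub]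
  apply unique_minimizer_of_subgradient (g := fun Z => γ * nuclearNorm Z)
  · rw [hres, hN _ _ _ _ hT, frobInner_mul_mul_transpose, hV, hU, transpose_one, Matrix.one_mul,
      Matrix.mul_one, frobInner_rectDiag_left, Finset.mul_sum]
    refine Finset.sum_congr rfl fun k _ => ?_
    rw [rectDiag_castLE, Pi.sub_apply, sub_softThresh_mul_softThresh hγ.le (hΛ k)]
  · intro Z
    obtain ⟨W, σ, Q, hZ⟩ := exists_isSVD Z
    rw [hN _ _ _ _ hZ]
    obtain ⟨hW, -, hQ, -, hσ, rfl⟩ := hZ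
    rw [hres, frobInner_mul_mul_transpose]
    refine frobInner_rectDiag_le hγ.le (fun k => sub_nonneg.mpr (softThresh_le_self hγ.le (hΛ k)))
      (fun k => sub_softThresh_le hγ.le (hΛ k)) hσ ?_ ?_
    · exact transpose_mul_transpose_mul_self_eq_one hV' hW
    · exact transpose_mul_transpose_mul_self_eq_one hU' hQ
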